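/- Let P be a Markov kernel with invariant π, V ≥ 1, and suppose |||P^k − π|||_{V^{1/r}} ≤ M_r γ_r^k for all k ≥ 1, with γ_r < 1. Let f_c satisfy πf_c = 0, |f_c| ≤ V^{1/r} and |f_c| ≤ V^{1−1/r} pointwise. Then for any probability measure π₀ with ‖π₀P^i − π‖_V ≤ CMγ^i (C ≥ 0, γ < 1, M < ∞), the off-diagonal covariance sum satisfies (2/n)∑_{i=0}^{n−2}∑_{j=i+1}^{n−1} E_{π₀}[f_c(X_i)f_c(X_j)] ≤ (2M_rγ_r/(1−γ_r))·(πV + CM/(n(1−γ))). -/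

import Mathlib

open MeasureTheory ProbabilityTheory

/-- One step of the Markov chain on the level of distributions: μ ↦ μP. -/
noncomputable def kstep {X : Type*} [MeasurableSpace X] (P : Kernel X X)
    (μ : Measure X) : Measure X := μ.bind (fun x => P x)

/-- n-step evolution: μ ↦ μPⁿ. -/
noncomputable def evolve {X : Type*} [MeasurableSpace X] (P : Kernel X X)
    (μ : Measure X) (n : ℕ) : Measure X := (kstep P)^[n] μ

/-!
Write `E_{π₀}[f_c(X_i) f_c(X_j)] = (π₀Pⁱ)(f_c · P^{j-i} f_c)`. Since `π f_c = 0`, the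
`V^{1/r}`-ergodicity bounds `|P^k f_c|` by `M_r γ_r^k V^{1/r}`, and together with
`|f_c| ≤ V^{1-1/r}` the integrand is at most `M_r γ_r^{j-i} V`. The `V`-norm convergence of
`π₀Pⁱ` to `π` makes `V` integrable against `π₀Pⁱ` (test it on the truncations `min V N`) and
bounds its integral by `πV + CMγⁱ`. Summing the two geometric series gives the bound.
-/

open Finset

lemma sum_Ico_pow_sub_le {ρ : ℝ} (h0 : 0 ≤ ρ) (h1 : ρ < 1) (i n : ℕ) :
    ∑ j ∈ Ico (i + 1) n, ρ ^ (j - i) ≤ ρ / (1 - ρ) := by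
  rw [sum_Ico_eq_sum_range]
  have hshift : ∀ t, ρ ^ (i + 1 + t - i) = ρ * ρ ^ t := fun t => by
    rw [show i + 1 + t - i = t + 1 by omega, pow_succ']
  simp only [hshift, ← mul_sum, range_eq_Ico]
  calc ρ * ∑ t ∈ Ico 0 (n - (i + 1)), ρ ^ t ≤ ρ * (ρ ^ 0 / (1 - ρ)) :=
        mul_le_mul_of_nonneg_left (geom_sum_Ico_le_of_lt_one h0 h1) h0
    _ = ρ / (1 - ρ) := by ring

lemma sum_range_sum_Ico_pow_sub_mul_le {ρ : ℝ} (h0 : 0 ≤ ρ) (h1 : ρ < 1) {b : ℕ → ℝ}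
    (hb : ∀ i, 0 ≤ b i) (m n : ℕ) :
    ∑ i ∈ range m, ∑ j ∈ Ico (i + 1) n, ρ ^ (j - i) * b i ≤
      ρ / (1 - ρ) * ∑ i ∈ range m, b i := by
  rw [mul_sum]
  gcongr with i
  rw [← sum_mul]
  exact mul_le_mul_of_nonneg_right (sum_Ico_pow_sub_le h0 h1 i n) (hb i)

lemma sum_range_add_geom_le {a c γ : ℝ} (ha : 0 ≤ a) (hc : 0 ≤ c) (h0 : 0 ≤ γ) (h1 : γ < 1)
    {m n : ℕ} (hmn : m ≤ n) :
    ∑ i ∈ range m, (a + c * γ ^ i) ≤ n * a + c / (1 - γ) := by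
  rw [sum_add_distrib, sum_const, card_range, nsmul_eq_mul, ← mul_sum, range_eq_Ico]
  have hgeom : ∑ i ∈ Ico 0 m, γ ^ i ≤ 1 / (1 - γ) := by
    simpa using geom_sum_Ico_le_of_lt_one (m := 0) (n := m) h0 h1
  rw [div_eq_mul_one_div c]
  gcongr

lemma abs_mul_le_of_abs_le_rpow {v a b c s : ℝ} (hv : 0 < v) (ha : |a| ≤ v ^ (1 - s))
    (hb : |b| ≤ c * v ^ s) : |a * b| ≤ c * v := by
  calc |a * b| = |a| * |b| := abs_mul a b
    _ ≤ v ^ (1 - s) * (c * v ^ s) := mul_le_mul ha hb (abs_nonneg _) (by positivity)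
    _ = c * v := by rw [mul_left_comm, ← Real.rpow_add hv, sub_add_cancel, Real.rpow_one]

section

variable {X : Type*} [MeasurableSpace X]

instance isProbabilityMeasure_evolve (P : Kernel X X) [IsMarkovKernel P] (μ : Measure X)
    [IsProbabilityMeasure μ] (n : ℕ) : IsProbabilityMeasure (evolve P μ n) := by
  induction n with
  | zero => assumption
  | succ n ih =>
    rw [evolve, Function.iterate_succ_apply']
    exact inferInstanceAs (IsProbabilityMeasure (P ∘ₘ evolve P μ n))

lemma integrable_of_integral_min_le {μ : Measure X} [IsFiniteMeasure μ] {V : X → ℝ}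
    (hVm : Measurable V) (hV0 : ∀ x, 0 ≤ V x) {K : ℝ}
    (hK : ∀ N : ℕ, ∫ x, min (V x) N ∂μ ≤ K) : Integrable V μ := by
  set g : ℕ → X → ℝ := fun N x => min (V x) N
  have hg0 N x : 0 ≤ g N x := le_min (hV0 x) N.cast_nonneg
  have hgm N : Measurable (g N) := hVm.min measurable_const
  have hg_int N : Integrable (g N) μ :=
    (integrable_const (N : ℝ)).mono' (hgm N).aestronglyMeasurable
      (.of_forall fun x => by
        rw [Real.norm_eq_abs, abs_of_nonneg (hg0 N x)]
        exact min_le_right _ _)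
  have hsup x : ENNReal.ofReal (V x) = ⨆ N : ℕ, ENNReal.ofReal (g N x) := by
    refine le_antisymm (le_iSup_of_le ⌈V x⌉₊ ?_) (iSup_le fun N => ?_)
    · rw [show g ⌈V x⌉₊ x = V x from min_eq_left (Nat.le_ceil _)]
    · exact ENNReal.ofReal_le_ofReal (min_le_left _ _)
  have hmono : Monotone fun N x => ENNReal.ofReal (g N x) := fun a b hab x =>
    ENNReal.ofReal_le_ofReal (min_le_min le_rfl (Nat.cast_le.2 hab))
  have hlint : ∫⁻ x, ENNReal.ofReal (V x) ∂μ ≤ ENNReal.ofReal K := by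
    simp_rw [hsup]
    rw [lintegral_iSup (fun N => (hgm N).ennreal_ofReal) hmono]
    refine iSup_le fun N => ?_
    rw [← ofReal_integral_eq_lintegral_ofReal (hg_int N) (.of_forall (hg0 N))]
    exact ENNReal.ofReal_le_ofReal (hK N)
  refine ⟨hVm.aestronglyMeasurable, ?_⟩
  rw [hasFiniteIntegral_iff_ofReal (.of_forall hV0)]
  exact hlint.trans_lt ENNReal.ofReal_lt_top

lemma integral_le_mul_of_abs_le_mul {μ : Measure X} {F V : X → ℝ} {c B : ℝ} (hc : 0 ≤ c)
    (hV : Integrable V μ) (hVB : ∫ x, V x ∂μ ≤ B) (hF : ∀ x, |F x| ≤ c * V x) :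
    ∫ x, F x ∂μ ≤ c * B :=
  calc ∫ x, F x ∂μ ≤ ‖∫ x, F x ∂μ‖ := Real.le_norm_self _
    _ ≤ ∫ x, c * V x ∂μ := norm_integral_le_of_norm_le (hV.const_mul c) (.of_forall hF)
    _ = c * ∫ x, V x ∂μ := integral_const_mul c _
    _ ≤ c * B := mul_le_mul_of_nonneg_left hVB hc

/-- `‖μ - ν‖_V ≤ ε`, tested against the measurable functions dominated by `V`. -/
def VNormDistLE (V : X → ℝ) (μ ν : Measure X) (ε : ℝ) : Prop :=
  ∀ g : X → ℝ, Measurable g → (∀ x, |g x| ≤ V x) → |∫ x, g x ∂μ - ∫ x, g x ∂ν| ≤ ε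

namespace VNormDistLE

variable {V : X → ℝ} {μ ν : Measure X} {ε : ℝ}

lemma integral_le (h : VNormDistLE V μ ν ε) (hV : Integrable V ν) {g : X → ℝ}
    (hgm : Measurable g) (hgV : ∀ x, |g x| ≤ V x) : ∫ x, g x ∂μ ≤ ∫ x, V x ∂ν + ε := by
  have hν : ∫ x, g x ∂ν ≤ ∫ x, V x ∂ν := by
    by_cases hg : Integrable g ν
    · exact integral_mono hg hV fun x => (le_abs_self _).trans (hgV x)
    · rw [integral_undef hg]
      exact integral_nonneg fun x => (abs_nonneg _).trans (hgV x)
  linarith [(abs_le.1 (h g hgm hgV)).2]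

lemma integral_weight_le (h : VNormDistLE V μ ν ε) (hV : Integrable V ν) (hVm : Measurable V)
    (hV0 : ∀ x, 0 ≤ V x) : ∫ x, V x ∂μ ≤ ∫ x, V x ∂ν + ε :=
  h.integral_le hV hVm fun x => (abs_of_nonneg (hV0 x)).le

lemma integrable [IsFiniteMeasure μ] (h : VNormDistLE V μ ν ε) (hV : Integrable V ν)
    (hVm : Measurable V) (hV0 : ∀ x, 0 ≤ V x) : Integrable V μ :=
  integrable_of_integral_min_le hVm hV0 fun N =>
    h.integral_le hV (hVm.min measurable_const) fun x => by
      rw [abs_of_nonneg (le_min (hV0 x) N.cast_nonneg)]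
      exact min_le_left _ _

end VNormDistLE

end

theorem offdiagonal_covariance_bound_general {X : Type*} [MeasurableSpace X]
    (P : Kernel X X) [IsMarkovKernel P]
    (V : X → ℝ) (hVm : Measurable V) (hV1 : ∀ x, 1 ≤ V x)
    (π π₀ : Measure X) [IsProbabilityMeasure π₀]
    (hπV : Integrable V π)
    (r : ℝ)
    (Mr γr : ℝ) (hMr : 0 < Mr) (hγr0 : 0 < γr) (hγr1 : γr < 1)
    (hErgVr : ∀ (x : X) (k : ℕ) (g : X → ℝ), Measurable g →
      (∀ y, |g y| ≤ (V y) ^ (1 / r)) → 1 ≤ k →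
      |∫ y, g y ∂(evolve P (Measure.dirac x) k) - ∫ y, g y ∂π| ≤
        Mr * γr ^ k * (V x) ^ (1 / r))
    (fc : X → ℝ) (hfcm : Measurable fc)
    (hfcπ : ∫ x, fc x ∂π = 0)
    (hfc₁ : ∀ x, |fc x| ≤ (V x) ^ (1 / r))
    (hfc₂ : ∀ x, |fc x| ≤ (V x) ^ (1 - 1 / r))
    (C M γ : ℝ) (hC : 0 ≤ C) (hM : 0 < M) (hγ0 : 0 < γ) (hγ1 : γ < 1)
    (hconv : ∀ (i : ℕ) (g : X → ℝ), Measurable g → (∀ x, |g x| ≤ V x) →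
      |∫ x, g x ∂(evolve P π₀ i) - ∫ x, g x ∂π| ≤ C * M * γ ^ i)
    (n : ℕ) (hn : 1 ≤ n) :
    (2 / (n : ℝ)) * ∑ i ∈ Finset.range (n - 1), ∑ j ∈ Finset.Ico (i + 1) n,
        ∫ x, fc x * (∫ y, fc y ∂(evolve P (Measure.dirac x) (j - i)))
          ∂(evolve P π₀ i) ≤
      (2 * Mr * γr / (1 - γr)) *
        (∫ x, V x ∂π + C * M / (n * (1 - γ))) := by
  set pV := ∫ x, V x ∂π
  have hV0 x : 0 ≤ V x := zero_le_one.trans (hV1 x)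
  have hpV : 0 ≤ pV := integral_nonneg hV0
  have hdist i : VNormDistLE V (evolve P π₀ i) π (C * M * γ ^ i) := hconv i
  have hterm i j (hij : i < j) :
      ∫ x, fc x * (∫ y, fc y ∂(evolve P (Measure.dirac x) (j - i))) ∂(evolve P π₀ i) ≤
        γr ^ (j - i) * (Mr * (pV + C * M * γ ^ i)) := by
    have hpt x : |fc x * ∫ y, fc y ∂(evolve P (Measure.dirac x) (j - i))| ≤
        Mr * γr ^ (j - i) * V x := by
      refine abs_mul_le_of_abs_le_rpow (zero_lt_one.trans_le (hV1 x)) (hfc₂ x) ?_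
      simpa [hfcπ] using hErgVr x (j - i) fc hfcm hfc₁ (by omega)
    calc _ ≤ Mr * γr ^ (j - i) * (pV + C * M * γ ^ i) :=
          integral_le_mul_of_abs_le_mul (by positivity) ((hdist i).integrable hπV hVm hV0)
            ((hdist i).integral_weight_le hπV hVm hV0) hpt
      _ = _ := by ring
  have hn0 : (0 : ℝ) < n := by exact_mod_cast hn
  calc _ ≤ 2 / (n : ℝ) * ∑ i ∈ range (n - 1), ∑ j ∈ Ico (i + 1) n,
          γr ^ (j - i) * (Mr * (pV + C * M * γ ^ i)) := by
        gcongr with i _ j hj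
        exact hterm i j (mem_Ico.1 hj).1
    _ ≤ 2 / (n : ℝ) * (γr / (1 - γr) * ∑ i ∈ range (n - 1), Mr * (pV + C * M * γ ^ i)) := by
        gcongr
        exact sum_range_sum_Ico_pow_sub_mul_le hγr0.le hγr1 (fun i => by positivity) _ _
    _ ≤ 2 / (n : ℝ) * (γr / (1 - γr) * (Mr * (n * pV + C * M / (1 - γ)))) := by
        rw [← mul_sum]
        gcongr
        exact sum_range_add_geom_le hpV (by positivity) hγ0.le hγ1 (Nat.sub_le n 1)
    _ = _ := by
        have : 1 - γr ≠ 0 := by linarith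
        have : 1 - γ ≠ 0 := by linarith
        field_simp

/-- bound on the off-diagonal covariance sum
(2/n) ∑_{i=0}^{n-2} ∑_{j=i+1}^{n-1} E_{π₀}[f_c(X_i) f_c(X_j)]
  ≤ (2 M_r γ_r/(1-γ_r)) (πV + CM/(n(1-γ))),
where E_{π₀}[f_c(X_i) f_c(X_j)] = π₀(Pⁱ(f_c · P^{j-i} f_c)).  The V^{1/r}-norm
ergodicity hypothesis and the bound ‖π₀Pⁱ - π‖_V ≤ CMγⁱ are expressed via the
defining property of the V-norm distance. -/
theorem offdiagonal_covariance_bound {X : Type*} [MeasurableSpace X]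
    (P : Kernel X X) [IsMarkovKernel P]
    (V : X → ℝ) (hVm : Measurable V) (hV1 : ∀ x, 1 ≤ V x)
    (π π₀ : Measure X) [IsProbabilityMeasure π] [IsProbabilityMeasure π₀]
    (hinv : π.bind (fun x => P x) = π)
    (hπV : Integrable V π) (hπ₀V : Integrable V π₀)
    (r : ℝ) (hr : 1 < r)
    (Mr γr : ℝ) (hMr : 0 < Mr) (hγr0 : 0 < γr) (hγr1 : γr < 1)
    (hErgVr : ∀ (x : X) (k : ℕ) (g : X → ℝ), Measurable g →
      (∀ y, |g y| ≤ (V y) ^ (1 / r)) → 1 ≤ k →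
      |∫ y, g y ∂(evolve P (Measure.dirac x) k) - ∫ y, g y ∂π| ≤
        Mr * γr ^ k * (V x) ^ (1 / r))
    (fc : X → ℝ) (hfcm : Measurable fc)
    (hfcπ : ∫ x, fc x ∂π = 0)
    (hfc₁ : ∀ x, |fc x| ≤ (V x) ^ (1 / r))
    (hfc₂ : ∀ x, |fc x| ≤ (V x) ^ (1 - 1 / r))
    (C M γ : ℝ) (hC : 0 ≤ C) (hM : 0 < M) (hγ0 : 0 < γ) (hγ1 : γ < 1)
    (hconv : ∀ (i : ℕ) (g : X → ℝ), Measurable g → (∀ x, |g x| ≤ V x) →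
      |∫ x, g x ∂(evolve P π₀ i) - ∫ x, g x ∂π| ≤ C * M * γ ^ i)
    (n : ℕ) (hn : 1 ≤ n) :
    (2 / (n : ℝ)) * ∑ i ∈ Finset.range (n - 1), ∑ j ∈ Finset.Ico (i + 1) n,
        ∫ x, fc x * (∫ y, fc y ∂(evolve P (Measure.dirac x) (j - i)))
          ∂(evolve P π₀ i) ≤
      (2 * Mr * γr / (1 - γr)) *
        (∫ x, V x ∂π + C * M / (n * (1 - γ))) :=
  offdiagonal_covariance_bound_general P V hVm hV1 π π₀ hπV r Mr γr hMr hγr0 hγr1 hErgVr fc hfcm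
    hfcπ hfc₁ hfc₂ C M γ hC hM hγ0 hγ1 hconv n hn
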